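/- Let ν > 0, C > 0, and α ∈ (1/2, 1), and let E : [0,T] → [0,∞) be C¹ with E'(t) ≤ -Cν E(t)^{1/(1-α)}. Then ν ∫₀^T E(t) dt ≤ C' · ν^{(2α-1)/α}, where C' depends only on C and α (explicitly C' = C^{-(1-α)/α} ((1-α)/α)^{(1-α)/α} · α/(2α-1) up to constants), and in particular ν ∫₀^T E(t) dt → 0 as ν → 0. -/
import Mathlib

open MeasureTheory Real Filter Topology
noncomputable section

/-- Explicit vanishing-viscosity dissipation rate: if for every `ν > 0` the nonnegative
`C¹` energy `E ν` satisfies `E' ≤ -C ν E^(1/(1-α))` with `α ∈ (1/2,1)`, then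
`ν ∫₀ᵀ E ν ≤ C' ν^((2α-1)/α)` with `C'` depending only on `C` and `α`; in particular
`ν ∫₀ᵀ E ν → 0` as `ν → 0`. -/
theorem stmt7 (T C α : ℝ) (hT : 0 < T) (hC : 0 < C) (hα : α ∈ Set.Ioo (1/2 : ℝ) 1)
    (E E' : ℝ → ℝ → ℝ)
    (hEnn : ∀ ν > 0, ∀ t ∈ Set.Icc (0:ℝ) T, 0 ≤ E ν t)
    (hderiv : ∀ ν > 0, ∀ t ∈ Set.Icc (0:ℝ) T, HasDerivAt (E ν) (E' ν t) t)
    (hE'cont : ∀ ν > 0, ContinuousOn (E' ν) (Set.Icc (0:ℝ) T))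
    (hineq : ∀ ν > 0, ∀ t ∈ Set.Icc (0:ℝ) T, E' ν t ≤ -C * ν * (E ν t) ^ ((1:ℝ)/(1-α))) :
    ∃ C' > 0, (∀ ν > 0, ν * ∫ t in (0:ℝ)..T, E ν t ≤ C' * ν ^ ((2*α - 1)/α)) ∧
      Tendsto (fun ν => ν * ∫ t in (0:ℝ)..T, E ν t) (nhdsWithin 0 (Set.Ioi 0)) (nhds 0) := by
  obtain ⟨hα1, hα2⟩ := hα
  have hα0 : 0 < α := by linarith
  have hb : 0 < 1 - α := by linarith
  have h2 : 0 < 2*α - 1 := by linarith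
  set β : ℝ := (1-α)/α with hβ
  have hβ0 : 0 < β := div_pos hb hα0
  have hβ1 : β < 1 := by rw [hβ, div_lt_one hα0]; linarith
  have hq : (2*α-1)/α = 1 - β := by rw [hβ]; field_simp; ring
  set p : ℝ := 1/(1-α) with hp
  have hp1 : 1 < p := by rw [hp, lt_div_iff₀ hb]; linarith
  have hpm0 : 0 < p - 1 := by linarith
  -- the pointwise decay bound
  have key : ∀ ν > 0, ∀ t ∈ Set.Ioc (0:ℝ) T,
      E ν t ≤ (C*ν*(p-1))^(-β) * t^(-β) := by
    intro ν hν t ht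
    have htIcc : t ∈ Set.Icc (0:ℝ) T := ⟨ht.1.le, ht.2⟩
    have hcont : ContinuousOn (E ν) (Set.Icc 0 T) := fun s hs =>
      ((hderiv ν hν s hs).continuousAt).continuousWithinAt
    have hanti : AntitoneOn (E ν) (Set.Icc 0 T) := by
      apply antitoneOn_of_deriv_nonpos (convex_Icc 0 T) hcont
      · intro s hs
        rw [interior_Icc] at hs
        exact ((hderiv ν hν s ⟨hs.1.le, hs.2.le⟩).differentiableAt).differentiableWithinAt
      · intro s hs
        rw [interior_Icc] at hs
        have hs' : s ∈ Set.Icc (0:ℝ) T := ⟨hs.1.le, hs.2.le⟩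
        rw [(hderiv ν hν s hs').deriv]
        have h1 := hineq ν hν s hs'
        have h2 : 0 ≤ C * ν * (E ν s) ^ p := by
          have := Real.rpow_nonneg (hEnn ν hν s hs') p
          positivity
        linarith
    have hKpos : 0 < C*ν*(p-1) := by positivity
    have hKt : 0 < C*ν*(p-1)*t := by have := ht.1; positivity
    rw [← Real.mul_rpow hKpos.le ht.1.le]
    rcases eq_or_lt_of_le (hEnn ν hν t htIcc) with h0 | hEt
    · rw [← h0]; positivity
    · have hsub : Set.Icc (0:ℝ) t ⊆ Set.Icc 0 T := Set.Icc_subset_Icc le_rfl ht.2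
      have hpos' : ∀ s ∈ Set.Icc (0:ℝ) t, 0 < E ν s := fun s hs =>
        lt_of_lt_of_le hEt (hanti (hsub hs) htIcc hs.2)
      set g : ℝ → ℝ := fun s => (E ν s)^(1-p) - C*ν*(p-1)*s with hg
      have hgderiv : ∀ s ∈ Set.Icc (0:ℝ) t,
          HasDerivAt g (E' ν s * (1-p) * (E ν s)^(1-p-1) - C*ν*(p-1)) s := by
        intro s hs
        have h1 := (hderiv ν hν s (hsub hs)).rpow_const (p := 1-p)
          (Or.inl (ne_of_gt (hpos' s hs)))
        have h2 : HasDerivAt (fun s => C*ν*(p-1)*s) (C*ν*(p-1)) s := by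
          simpa using (hasDerivAt_id s).const_mul (C*ν*(p-1))
        exact h1.sub h2
      have hmono : MonotoneOn g (Set.Icc 0 t) := by
        apply monotoneOn_of_deriv_nonneg (convex_Icc 0 t)
        · exact fun s hs => ((hgderiv s hs).continuousAt).continuousWithinAt
        · intro s hs
          rw [interior_Icc] at hs
          exact ((hgderiv s ⟨hs.1.le, hs.2.le⟩).differentiableAt).differentiableWithinAt
        · intro s hs
          rw [interior_Icc] at hs
          have hs' : s ∈ Set.Icc (0:ℝ) t := ⟨hs.1.le, hs.2.le⟩
          rw [(hgderiv s hs').deriv]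
          have hEs := hpos' s hs'
          have h1 := hineq ν hν s (hsub hs')
          have hprod : (E ν s)^p * (E ν s)^(1-p-1) = 1 := by
            rw [← Real.rpow_add hEs, show p + (1-p-1) = 0 by ring, Real.rpow_zero]
          have hA : 0 ≤ (E ν s)^(1-p-1) := (Real.rpow_pos_of_pos hEs _).le
          have h5 : E' ν s * (E ν s)^(1-p-1) ≤ -C*ν*(E ν s)^p * (E ν s)^(1-p-1) :=
            mul_le_mul_of_nonneg_right h1 hA
          have h6 := mul_le_mul_of_nonpos_left h5 (show (1:ℝ)-p ≤ 0 by linarith)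
          nlinarith [h6, hprod]
      have h0t : (0:ℝ) ∈ Set.Icc 0 t := ⟨le_rfl, ht.1.le⟩
      have htt : t ∈ Set.Icc (0:ℝ) t := ⟨ht.1.le, le_rfl⟩
      have hm := hmono h0t htt ht.1.le
      simp only [hg, mul_zero, sub_zero] at hm
      have hE0 : 0 ≤ (E ν 0)^(1-p) := Real.rpow_nonneg (hEnn ν hν 0 ⟨le_rfl, hT.le⟩) _
      have hKle : C*ν*(p-1)*t ≤ (E ν t)^(1-p) := by linarith
      have hfin := Real.rpow_le_rpow_of_nonpos hKt hKle (neg_nonpos.mpr hβ0.le)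
      have hexp : (1-p)*(-β) = 1 := by rw [hp, hβ]; field_simp; ring
      rwa [← Real.rpow_mul hEt.le, hexp, Real.rpow_one] at hfin
  -- the constant
  have h1β : 0 < 1 - β := by linarith
  set C' : ℝ := (C*(p-1))^(-β) * (T^(1-β)/(1-β)) with hC'
  have hC'pos : 0 < C' := by positivity
  have hbound : ∀ ν > 0, ν * ∫ t in (0:ℝ)..T, E ν t ≤ C' * ν^(1-β) := by
    intro ν hν
    have hcont : ContinuousOn (E ν) (Set.Icc 0 T) := fun s hs =>
      ((hderiv ν hν s hs).continuousAt).continuousWithinAt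
    have hInt1 : IntegrableOn (E ν) (Set.Ioc 0 T) :=
      (hcont.integrableOn_Icc).mono_set Set.Ioc_subset_Icc_self
    have hII : IntervalIntegrable (fun t : ℝ => (C*ν*(p-1))^(-β) * t^(-β)) volume 0 T :=
      (intervalIntegral.intervalIntegrable_rpow' (by linarith : (-1:ℝ) < -β)).const_mul _
    have hInt2 : IntegrableOn (fun t : ℝ => (C*ν*(p-1))^(-β) * t^(-β)) (Set.Ioc 0 T) := hII.1
    have hle := setIntegral_mono_on hInt1 hInt2 measurableSet_Ioc (key ν hν)
    have heq : ∫ t in Set.Ioc (0:ℝ) T, (C*ν*(p-1))^(-β) * t^(-β)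
        = (C*ν*(p-1))^(-β) * (T^(1-β)/(1-β)) := by
      rw [← intervalIntegral.integral_of_le hT.le, intervalIntegral.integral_const_mul,
        integral_rpow (Or.inl (by linarith : (-1:ℝ) < -β)),
        Real.zero_rpow (by linarith : -β + 1 ≠ 0), show -β + 1 = 1 - β by ring, sub_zero]
    have hle2 : ∫ t in (0:ℝ)..T, E ν t ≤ (C*ν*(p-1))^(-β) * (T^(1-β)/(1-β)) := by
      rw [intervalIntegral.integral_of_le hT.le]
      calc ∫ t in Set.Ioc (0:ℝ) T, E ν t
          ≤ ∫ t in Set.Ioc (0:ℝ) T, (C*ν*(p-1))^(-β) * t^(-β) := hle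
        _ = _ := heq
    have hsplit : (C*ν*(p-1))^(-β) = (C*(p-1))^(-β) * ν^(-β) := by
      rw [show C*ν*(p-1) = (C*(p-1))*ν by ring,
        Real.mul_rpow (by positivity) hν.le]
    have hνpow : ν * ν^(-β) = ν^(1-β) := by
      rw [show (1:ℝ)-β = 1 + -β by ring, Real.rpow_add hν, Real.rpow_one]
    calc ν * ∫ t in (0:ℝ)..T, E ν t
        ≤ ν * ((C*ν*(p-1))^(-β) * (T^(1-β)/(1-β))) :=
          mul_le_mul_of_nonneg_left hle2 hν.le
      _ = C' * ν^(1-β) := by rw [hsplit, hC', ← hνpow]; ring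
  refine ⟨C', hC'pos, ?_, ?_⟩
  · intro ν hν
    rw [hq]
    exact hbound ν hν
  · have hlim : Tendsto (fun ν : ℝ => C' * ν^(1-β)) (nhdsWithin 0 (Set.Ioi 0)) (nhds 0) := by
      have h1 : Tendsto (fun ν : ℝ => ν^(1-β)) (nhds 0) (nhds ((0:ℝ)^(1-β))) :=
        (Real.continuousAt_rpow_const 0 (1-β) (Or.inr h1β.le)).tendsto
      rw [Real.zero_rpow (by linarith : (1:ℝ)-β ≠ 0)] at h1
      simpa using ((h1.mono_left nhdsWithin_le_nhds).const_mul C')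
    apply squeeze_zero' ?_ ?_ hlim
    · filter_upwards [self_mem_nhdsWithin] with ν hν
      exact mul_nonneg (le_of_lt hν)
        (intervalIntegral.integral_nonneg hT.le (fun t ht => hEnn ν hν t ht))
    · filter_upwards [self_mem_nhdsWithin] with ν hν
      exact hbound ν hν
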